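/- Fix p ∈ (0,1), σ > 0 and τ > 0, and define for δ ∈ ℝ the conditional Jeffreys prior π^J(δ) = [ ∫_ℝ ((1−p) x exp(−x²/2))² / ( p σ exp(−σ²(x + δ/(στ))²/2) + (1−p) exp(−x²/2) ) dx ]^{1/2}. Then there is a constant c > 0 (independent of δ) with π^J(δ) ≥ c for all δ ∈ ℝ, and consequently ∫_ℝ π^J(δ) dδ = +∞: the conditional Jeffreys prior on the standardized mean difference δ is improper. -/

import Mathlib

/-! Uniformly in `δ`, the denominator of the integrand lies between `(1-p) e^{-x²/2}` and
`pσ + (1-p)`. The first bound dominates the integrand by `(1-p) x² e^{-x²/2}`, so it is integrable;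
the second bounds it below by the `δ`-free positive multiple `(1-p)²/(pσ + 1 - p) · x² e^{-x²}`.
Hence `π^J(δ) ≥ c > 0` for all `δ`, and `π^J` has infinite integral over `ℝ`. -/

open MeasureTheory

noncomputable section

/-- The conditional Jeffreys prior for the standardized mean difference `δ` in the
Mengersen–Robert reparametrization of a two-component Gaussian mixture:
`π^J(δ) = [∫ ((1-p) x e^{-x²/2})² / (pσ e^{-σ²(x + δ/(στ))²/2} + (1-p) e^{-x²/2}) dx]^{1/2}`. -/
def condJeffreysDelta (p σ τ δ : ℝ) : ℝ :=
  Real.sqrt (∫ x : ℝ,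
    ((1 - p) * x * Real.exp (-(x ^ 2) / 2)) ^ 2 /
      (p * σ * Real.exp (-(σ ^ 2 * (x + δ / (σ * τ)) ^ 2) / 2) +
        (1 - p) * Real.exp (-(x ^ 2) / 2)))

open Real Set

theorem integrable_pow_mul_exp_neg_mul_sq {b : ℝ} (hb : 0 < b) (n : ℕ) :
    Integrable fun x : ℝ => x ^ n * exp (-b * x ^ 2) := by
  simpa using integrable_rpow_mul_exp_neg_mul_sq hb (s := n) (by linarith [n.cast_nonneg (α := ℝ)])

theorem integral_sq_mul_exp_neg_mul_sq_pos {b : ℝ} (hb : 0 < b) :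
    0 < ∫ x : ℝ, x ^ 2 * exp (-b * x ^ 2) := by
  rw [integral_pos_iff_support_of_nonneg (fun x => by positivity)
    (integrable_pow_mul_exp_neg_mul_sq hb 2)]
  have hsupport : Ioi (0 : ℝ) ⊆ Function.support fun x : ℝ => x ^ 2 * exp (-b * x ^ 2) :=
    fun x hx => (mul_pos (pow_pos hx 2) (exp_pos _)).ne'
  exact (by simp : (0 : ENNReal) < volume (Ioi (0 : ℝ))).trans_le (measure_mono hsupport)

theorem lintegral_ofReal_eq_top_of_forall_le {α : Type*} [MeasurableSpace α] {μ : Measure α}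
    (hμ : μ univ = ⊤) {f : α → ℝ} {c : ℝ} (hc : 0 < c) (hf : ∀ x, c ≤ f x) :
    ∫⁻ x, ENNReal.ofReal (f x) ∂μ = ⊤ := by
  refine top_le_iff.mp (le_trans ?_ (lintegral_mono fun x => ENNReal.ofReal_le_ofReal (hf x)))
  simp [lintegral_const, hμ, hc]

/-- The integrand of `condJeffreysDelta p σ τ δ`, with `a = δ / (σ τ)`. -/
def jeffreysIntegrand (p σ a x : ℝ) : ℝ :=
  ((1 - p) * x * exp (-(x ^ 2) / 2)) ^ 2 /
    (p * σ * exp (-(σ ^ 2 * (x + a) ^ 2) / 2) + (1 - p) * exp (-(x ^ 2) / 2))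

section JeffreysIntegrand

variable {p σ : ℝ} (a : ℝ)

theorem jeffreysIntegrand_bounds (hp0 : 0 ≤ p) (hp1 : p < 1) (hσ : 0 ≤ σ) (x : ℝ) :
    (1 - p) ^ 2 / (p * σ + (1 - p)) * (x ^ 2 * exp (-1 * x ^ 2)) ≤ jeffreysIntegrand p σ a x ∧
      jeffreysIntegrand p σ a x ≤ (1 - p) * (x ^ 2 * exp (-(1 / 2) * x ^ 2)) := by
  have h1p : 0 < 1 - p := by linarith
  have hshifted : 0 ≤ p * σ * exp (-(σ ^ 2 * (x + a) ^ 2) / 2) := by positivity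
  have hshifted_le : p * σ * exp (-(σ ^ 2 * (x + a) ^ 2) / 2) ≤ p * σ :=
    mul_le_of_le_one_right (by positivity)
      (exp_le_one_iff.mpr (by nlinarith [sq_nonneg (σ * (x + a))]))
  have hcentred : 0 < (1 - p) * exp (-(x ^ 2) / 2) := by positivity
  have hcentred_le : (1 - p) * exp (-(x ^ 2) / 2) ≤ 1 - p :=
    mul_le_of_le_one_right h1p.le (exp_le_one_iff.mpr (by nlinarith [sq_nonneg x]))
  have hnumer :
      ((1 - p) * x * exp (-(x ^ 2) / 2)) ^ 2 = (1 - p) ^ 2 * (x ^ 2 * exp (-1 * x ^ 2)) := by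
    rw [mul_pow, mul_pow, ← exp_nat_mul]
    ring_nf
  have hratio : ((1 - p) * x * exp (-(x ^ 2) / 2)) ^ 2 / ((1 - p) * exp (-(x ^ 2) / 2)) =
      (1 - p) * (x ^ 2 * exp (-(1 / 2) * x ^ 2)) := by
    rw [show -(1 / 2) * x ^ 2 = -(x ^ 2) / 2 by ring]
    field_simp
  unfold jeffreysIntegrand
  constructor
  · calc _ = ((1 - p) * x * exp (-(x ^ 2) / 2)) ^ 2 / (p * σ + (1 - p)) := by rw [hnumer]; ring
      _ ≤ _ := div_le_div_of_nonneg_left (sq_nonneg _) (add_pos_of_nonneg_of_pos hshifted hcentred)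
          (add_le_add hshifted_le hcentred_le)
  · rw [← hratio]
    exact div_le_div_of_nonneg_left (sq_nonneg _) hcentred (le_add_of_nonneg_left hshifted)

theorem measurable_jeffreysIntegrand : Measurable (jeffreysIntegrand p σ a) := by
  unfold jeffreysIntegrand
  fun_prop

theorem integrable_jeffreysIntegrand (hp0 : 0 ≤ p) (hp1 : p < 1) (hσ : 0 ≤ σ) :
    Integrable (jeffreysIntegrand p σ a) := by
  refine ((integrable_pow_mul_exp_neg_mul_sq (by norm_num : (0 : ℝ) < 1 / 2) 2).const_mul
    (1 - p)).mono' (measurable_jeffreysIntegrand a).aestronglyMeasurable (ae_of_all _ fun x => ?_)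
  obtain ⟨hlower, hupper⟩ := jeffreysIntegrand_bounds a hp0 hp1 hσ x
  have h1p : 0 < 1 - p := by linarith
  rw [norm_of_nonneg ((by positivity : (0 : ℝ) ≤ _).trans hlower)]
  exact hupper

theorem mul_integral_sq_mul_exp_le_integral_jeffreysIntegrand (hp0 : 0 ≤ p) (hp1 : p < 1)
    (hσ : 0 ≤ σ) :
    (1 - p) ^ 2 / (p * σ + (1 - p)) * ∫ x : ℝ, x ^ 2 * exp (-1 * x ^ 2) ≤
      ∫ x, jeffreysIntegrand p σ a x := by
  have h1p : 0 < 1 - p := by linarith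
  rw [← integral_const_mul]
  exact integral_mono_of_nonneg (ae_of_all _ fun x => by positivity)
    (integrable_jeffreysIntegrand a hp0 hp1 hσ)
    (ae_of_all _ fun x => (jeffreysIntegrand_bounds a hp0 hp1 hσ x).1)

end JeffreysIntegrand

theorem condJeffreysDelta_improper_general (p σ τ : ℝ) (hp : p ∈ Set.Ioo (0 : ℝ) 1)
    (hσ : 0 < σ) :
    (∃ c : ℝ, 0 < c ∧ ∀ δ : ℝ, c ≤ condJeffreysDelta p σ τ δ) ∧
    (∫⁻ δ : ℝ, ENNReal.ofReal (condJeffreysDelta p σ τ δ)) = ⊤ := by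
  obtain ⟨hp0, hp1⟩ := hp
  have h1p : 0 < 1 - p := by linarith
  set m := (1 - p) ^ 2 / (p * σ + (1 - p)) * ∫ x : ℝ, x ^ 2 * exp (-1 * x ^ 2)
  have hm : 0 < m := mul_pos (by positivity) (integral_sq_mul_exp_neg_mul_sq_pos one_pos)
  have hbound : ∀ δ, √m ≤ condJeffreysDelta p σ τ δ := fun δ =>
    sqrt_le_sqrt (mul_integral_sq_mul_exp_le_integral_jeffreysIntegrand _ hp0.le hp1 hσ.le)
  exact ⟨⟨√m, sqrt_pos.mpr hm, hbound⟩,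
    lintegral_ofReal_eq_top_of_forall_le (by simp) (sqrt_pos.mpr hm) hbound⟩

/-- for fixed `p ∈ (0,1)`, `σ > 0`, `τ > 0`, the conditional Jeffreys
prior `π^J(δ)` is bounded below by a positive constant independent of `δ`, and
consequently `∫_ℝ π^J(δ) dδ = +∞`: it is improper. -/
theorem condJeffreysDelta_improper (p σ τ : ℝ) (hp : p ∈ Set.Ioo (0 : ℝ) 1)
    (hσ : 0 < σ) (hτ : 0 < τ) :
    (∃ c : ℝ, 0 < c ∧ ∀ δ : ℝ, c ≤ condJeffreysDelta p σ τ δ) ∧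
    (∫⁻ δ : ℝ, ENNReal.ofReal (condJeffreysDelta p σ τ δ)) = ⊤ :=
  condJeffreysDelta_improper_general p σ τ hp hσ
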